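/- Let L : Fin 4 → Fin 4 → Fin 4 → ℝ satisfy L i j k = −L j i k for all i, j, k (antisymmetry in the first two indices). Define B : Fin 4 → Fin 4 → Fin 4 → ℝ by the Hodge dual in the first pair of indices: B i j k := (1/2)·Σ_{r,s} ε(i,j,r,s)·L r s k, where ε(i,j,r,s) is the sign of (i,j,r,s) as a permutation of (0,1,2,3) and zero if two of the indices coincide. Then the following two conditions are equivalent: (a) for every i, Σ_k B i k k = 0; (b) for all i, j, k, L i j k + L j k i + L k i j = 0. That is, in dimension 4 exactly, the trace conditions defining the Bianchi-type bundle coincide under Hodge duality with the Lanczos cyclic conditions on a tensor L antisymmetric in its first two indices. -/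
import Mathlib


/-- The Levi–Civita symbol on four indices: the sign of `(i, j, k, l)` as a
permutation of `(0, 1, 2, 3)`, and `0` if two indices coincide.  (For distinct
values the Vandermonde product below equals `±12`, with sign the signature.) -/
noncomputable def eps (i j k l : Fin 4) : ℝ :=
  (((j : ℝ) - (i : ℝ)) * ((k : ℝ) - (i : ℝ)) * ((l : ℝ) - (i : ℝ))
    * ((k : ℝ) - (j : ℝ)) * ((l : ℝ) - (j : ℝ)) * ((l : ℝ) - (k : ℝ))) / 12

/-- The Hodge dual of `L` in its first (antisymmetric) pair of indices:
`B i j k := (1/2)·Σ_{r,s} ε(i,j,r,s)·L r s k`. -/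
noncomputable def hodgeB (L : Fin 4 → Fin 4 → Fin 4 → ℝ) (i j k : Fin 4) : ℝ :=
  (1 / 2) * ∑ r, ∑ s, eps i j r s * L r s k

set_option maxHeartbeats 4000000 in
/-- In dimension `4` exactly, for a tensor `L` antisymmetric in its first two
indices, the trace conditions `Σ_k B i k k = 0` on its Hodge dual coincide
with the Lanczos cyclic conditions `L i j k + L j k i + L k i j = 0`. -/
theorem lanczos_trace_iff_cyclic (L : Fin 4 → Fin 4 → Fin 4 → ℝ)
    (hL : ∀ i j k, L i j k = -L j i k) :
    (∀ i, ∑ k, hodgeB L i k k = 0) ↔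
    (∀ i j k, L i j k + L j k i + L k i j = 0) := by
  have e : ∀ (x : Fin 4), x = 0 ∨ x = 1 ∨ x = 2 ∨ x = 3 := by decide
  have fv : ((3:Fin 4):ℕ)=3 ∧ ((2:Fin 4):ℕ)=2 ∧ ((1:Fin 4):ℕ)=1 ∧ ((0:Fin 4):ℕ)=0 := ⟨rfl, rfl, rfl, rfl⟩
  obtain ⟨f3, f2, f1, f0⟩ := fv
  constructor
  · intro h i j k
    have h0 := h 0; have h1 := h 1; have h2 := h 2; have h3 := h 3
    simp only [hodgeB, eps, Fin.sum_univ_four] at h0 h1 h2 h3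
    norm_num [f0, f1, f2, f3] at h0 h1 h2 h3
    have c123 : L 1 2 3 + L 2 3 1 + L 3 1 2 = 0 := by
      linarith [h0, hL 3 2 1, hL 1 3 2, hL 2 1 3]
    have c023 : L 0 2 3 + L 2 3 0 + L 3 0 2 = 0 := by
      linarith [h1, hL 3 2 0, hL 0 3 2, hL 2 0 3]
    have c013 : L 0 1 3 + L 1 3 0 + L 3 0 1 = 0 := by
      linarith [h2, hL 3 1 0, hL 0 3 1, hL 1 0 3]
    have c012 : L 0 1 2 + L 1 2 0 + L 2 0 1 = 0 := by
      linarith [h3, hL 2 1 0, hL 0 2 1, hL 1 0 2]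
    rcases e i with rfl|rfl|rfl|rfl <;> rcases e j with rfl|rfl|rfl|rfl <;>
        rcases e k with rfl|rfl|rfl|rfl
    · linarith [c012, c013, c023, c123, hL 0 0 0, hL 0 0 0, hL 0 0 0, hL 0 0 0, hL 0 0 0, hL 0 0 0]
    · linarith [c012, c013, c023, c123, hL 0 0 1, hL 0 1 0, hL 1 0 0, hL 0 0 1, hL 1 0 0, hL 0 1 0]
    · linarith [c012, c013, c023, c123, hL 0 0 2, hL 0 2 0, hL 2 0 0, hL 0 0 2, hL 2 0 0, hL 0 2 0]
    · linarith [c012, c013, c023, c123, hL 0 0 3, hL 0 3 0, hL 3 0 0, hL 0 0 3, hL 3 0 0, hL 0 3 0]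
    · linarith [c012, c013, c023, c123, hL 0 1 0, hL 1 0 0, hL 0 0 1, hL 1 0 0, hL 0 1 0, hL 0 0 1]
    · linarith [c012, c013, c023, c123, hL 0 1 1, hL 1 1 0, hL 1 0 1, hL 1 0 1, hL 1 1 0, hL 0 1 1]
    · linarith [c012, c013, c023, c123, hL 0 1 2, hL 1 2 0, hL 2 0 1, hL 1 0 2, hL 2 1 0, hL 0 2 1]
    · linarith [c012, c013, c023, c123, hL 0 1 3, hL 1 3 0, hL 3 0 1, hL 1 0 3, hL 3 1 0, hL 0 3 1]
    · linarith [c012, c013, c023, c123, hL 0 2 0, hL 2 0 0, hL 0 0 2, hL 2 0 0, hL 0 2 0, hL 0 0 2]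
    · linarith [c012, c013, c023, c123, hL 0 2 1, hL 2 1 0, hL 1 0 2, hL 2 0 1, hL 1 2 0, hL 0 1 2]
    · linarith [c012, c013, c023, c123, hL 0 2 2, hL 2 2 0, hL 2 0 2, hL 2 0 2, hL 2 2 0, hL 0 2 2]
    · linarith [c012, c013, c023, c123, hL 0 2 3, hL 2 3 0, hL 3 0 2, hL 2 0 3, hL 3 2 0, hL 0 3 2]
    · linarith [c012, c013, c023, c123, hL 0 3 0, hL 3 0 0, hL 0 0 3, hL 3 0 0, hL 0 3 0, hL 0 0 3]
    · linarith [c012, c013, c023, c123, hL 0 3 1, hL 3 1 0, hL 1 0 3, hL 3 0 1, hL 1 3 0, hL 0 1 3]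
    · linarith [c012, c013, c023, c123, hL 0 3 2, hL 3 2 0, hL 2 0 3, hL 3 0 2, hL 2 3 0, hL 0 2 3]
    · linarith [c012, c013, c023, c123, hL 0 3 3, hL 3 3 0, hL 3 0 3, hL 3 0 3, hL 3 3 0, hL 0 3 3]
    · linarith [c012, c013, c023, c123, hL 1 0 0, hL 0 0 1, hL 0 1 0, hL 0 1 0, hL 0 0 1, hL 1 0 0]
    · linarith [c012, c013, c023, c123, hL 1 0 1, hL 0 1 1, hL 1 1 0, hL 0 1 1, hL 1 0 1, hL 1 1 0]
    · linarith [c012, c013, c023, c123, hL 1 0 2, hL 0 2 1, hL 2 1 0, hL 0 1 2, hL 2 0 1, hL 1 2 0]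
    · linarith [c012, c013, c023, c123, hL 1 0 3, hL 0 3 1, hL 3 1 0, hL 0 1 3, hL 3 0 1, hL 1 3 0]
    · linarith [c012, c013, c023, c123, hL 1 1 0, hL 1 0 1, hL 0 1 1, hL 1 1 0, hL 0 1 1, hL 1 0 1]
    · linarith [c012, c013, c023, c123, hL 1 1 1, hL 1 1 1, hL 1 1 1, hL 1 1 1, hL 1 1 1, hL 1 1 1]
    · linarith [c012, c013, c023, c123, hL 1 1 2, hL 1 2 1, hL 2 1 1, hL 1 1 2, hL 2 1 1, hL 1 2 1]
    · linarith [c012, c013, c023, c123, hL 1 1 3, hL 1 3 1, hL 3 1 1, hL 1 1 3, hL 3 1 1, hL 1 3 1]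
    · linarith [c012, c013, c023, c123, hL 1 2 0, hL 2 0 1, hL 0 1 2, hL 2 1 0, hL 0 2 1, hL 1 0 2]
    · linarith [c012, c013, c023, c123, hL 1 2 1, hL 2 1 1, hL 1 1 2, hL 2 1 1, hL 1 2 1, hL 1 1 2]
    · linarith [c012, c013, c023, c123, hL 1 2 2, hL 2 2 1, hL 2 1 2, hL 2 1 2, hL 2 2 1, hL 1 2 2]
    · linarith [c012, c013, c023, c123, hL 1 2 3, hL 2 3 1, hL 3 1 2, hL 2 1 3, hL 3 2 1, hL 1 3 2]
    · linarith [c012, c013, c023, c123, hL 1 3 0, hL 3 0 1, hL 0 1 3, hL 3 1 0, hL 0 3 1, hL 1 0 3]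
    · linarith [c012, c013, c023, c123, hL 1 3 1, hL 3 1 1, hL 1 1 3, hL 3 1 1, hL 1 3 1, hL 1 1 3]
    · linarith [c012, c013, c023, c123, hL 1 3 2, hL 3 2 1, hL 2 1 3, hL 3 1 2, hL 2 3 1, hL 1 2 3]
    · linarith [c012, c013, c023, c123, hL 1 3 3, hL 3 3 1, hL 3 1 3, hL 3 1 3, hL 3 3 1, hL 1 3 3]
    · linarith [c012, c013, c023, c123, hL 2 0 0, hL 0 0 2, hL 0 2 0, hL 0 2 0, hL 0 0 2, hL 2 0 0]
    · linarith [c012, c013, c023, c123, hL 2 0 1, hL 0 1 2, hL 1 2 0, hL 0 2 1, hL 1 0 2, hL 2 1 0]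
    · linarith [c012, c013, c023, c123, hL 2 0 2, hL 0 2 2, hL 2 2 0, hL 0 2 2, hL 2 0 2, hL 2 2 0]
    · linarith [c012, c013, c023, c123, hL 2 0 3, hL 0 3 2, hL 3 2 0, hL 0 2 3, hL 3 0 2, hL 2 3 0]
    · linarith [c012, c013, c023, c123, hL 2 1 0, hL 1 0 2, hL 0 2 1, hL 1 2 0, hL 0 1 2, hL 2 0 1]
    · linarith [c012, c013, c023, c123, hL 2 1 1, hL 1 1 2, hL 1 2 1, hL 1 2 1, hL 1 1 2, hL 2 1 1]
    · linarith [c012, c013, c023, c123, hL 2 1 2, hL 1 2 2, hL 2 2 1, hL 1 2 2, hL 2 1 2, hL 2 2 1]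
    · linarith [c012, c013, c023, c123, hL 2 1 3, hL 1 3 2, hL 3 2 1, hL 1 2 3, hL 3 1 2, hL 2 3 1]
    · linarith [c012, c013, c023, c123, hL 2 2 0, hL 2 0 2, hL 0 2 2, hL 2 2 0, hL 0 2 2, hL 2 0 2]
    · linarith [c012, c013, c023, c123, hL 2 2 1, hL 2 1 2, hL 1 2 2, hL 2 2 1, hL 1 2 2, hL 2 1 2]
    · linarith [c012, c013, c023, c123, hL 2 2 2, hL 2 2 2, hL 2 2 2, hL 2 2 2, hL 2 2 2, hL 2 2 2]
    · linarith [c012, c013, c023, c123, hL 2 2 3, hL 2 3 2, hL 3 2 2, hL 2 2 3, hL 3 2 2, hL 2 3 2]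
    · linarith [c012, c013, c023, c123, hL 2 3 0, hL 3 0 2, hL 0 2 3, hL 3 2 0, hL 0 3 2, hL 2 0 3]
    · linarith [c012, c013, c023, c123, hL 2 3 1, hL 3 1 2, hL 1 2 3, hL 3 2 1, hL 1 3 2, hL 2 1 3]
    · linarith [c012, c013, c023, c123, hL 2 3 2, hL 3 2 2, hL 2 2 3, hL 3 2 2, hL 2 3 2, hL 2 2 3]
    · linarith [c012, c013, c023, c123, hL 2 3 3, hL 3 3 2, hL 3 2 3, hL 3 2 3, hL 3 3 2, hL 2 3 3]
    · linarith [c012, c013, c023, c123, hL 3 0 0, hL 0 0 3, hL 0 3 0, hL 0 3 0, hL 0 0 3, hL 3 0 0]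
    · linarith [c012, c013, c023, c123, hL 3 0 1, hL 0 1 3, hL 1 3 0, hL 0 3 1, hL 1 0 3, hL 3 1 0]
    · linarith [c012, c013, c023, c123, hL 3 0 2, hL 0 2 3, hL 2 3 0, hL 0 3 2, hL 2 0 3, hL 3 2 0]
    · linarith [c012, c013, c023, c123, hL 3 0 3, hL 0 3 3, hL 3 3 0, hL 0 3 3, hL 3 0 3, hL 3 3 0]
    · linarith [c012, c013, c023, c123, hL 3 1 0, hL 1 0 3, hL 0 3 1, hL 1 3 0, hL 0 1 3, hL 3 0 1]
    · linarith [c012, c013, c023, c123, hL 3 1 1, hL 1 1 3, hL 1 3 1, hL 1 3 1, hL 1 1 3, hL 3 1 1]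
    · linarith [c012, c013, c023, c123, hL 3 1 2, hL 1 2 3, hL 2 3 1, hL 1 3 2, hL 2 1 3, hL 3 2 1]
    · linarith [c012, c013, c023, c123, hL 3 1 3, hL 1 3 3, hL 3 3 1, hL 1 3 3, hL 3 1 3, hL 3 3 1]
    · linarith [c012, c013, c023, c123, hL 3 2 0, hL 2 0 3, hL 0 3 2, hL 2 3 0, hL 0 2 3, hL 3 0 2]
    · linarith [c012, c013, c023, c123, hL 3 2 1, hL 2 1 3, hL 1 3 2, hL 2 3 1, hL 1 2 3, hL 3 1 2]
    · linarith [c012, c013, c023, c123, hL 3 2 2, hL 2 2 3, hL 2 3 2, hL 2 3 2, hL 2 2 3, hL 3 2 2]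
    · linarith [c012, c013, c023, c123, hL 3 2 3, hL 2 3 3, hL 3 3 2, hL 2 3 3, hL 3 2 3, hL 3 3 2]
    · linarith [c012, c013, c023, c123, hL 3 3 0, hL 3 0 3, hL 0 3 3, hL 3 3 0, hL 0 3 3, hL 3 0 3]
    · linarith [c012, c013, c023, c123, hL 3 3 1, hL 3 1 3, hL 1 3 3, hL 3 3 1, hL 1 3 3, hL 3 1 3]
    · linarith [c012, c013, c023, c123, hL 3 3 2, hL 3 2 3, hL 2 3 3, hL 3 3 2, hL 2 3 3, hL 3 2 3]
    · linarith [c012, c013, c023, c123, hL 3 3 3, hL 3 3 3, hL 3 3 3, hL 3 3 3, hL 3 3 3, hL 3 3 3]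
  · intro h i
    rcases e i with rfl|rfl|rfl|rfl <;>
        simp only [hodgeB, eps, Fin.sum_univ_four] <;>
        norm_num [f0, f1, f2, f3]
    · linarith [h 1 2 3, hL 3 2 1, hL 1 3 2, hL 2 1 3]
    · linarith [h 0 2 3, hL 3 2 0, hL 0 3 2, hL 2 0 3]
    · linarith [h 0 1 3, hL 3 1 0, hL 0 3 1, hL 1 0 3]
    · linarith [h 0 1 2, hL 2 1 0, hL 0 2 1, hL 1 0 2]
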